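/- arXiv:1912.10829 — 3 statements merged into one kernel-verified Lean document; each statement's English description precedes it below -/
import Mathlib

section
/- Let X, Y : ℤ → ℝ be time series, let δmax ≥ 1 be a maximum lag, and let Δ₀ ≥ 1 be a fixed integer delay. For any coefficient vectors a, b, c indexed by i ∈ {1, …, δmax}, define the variable-lag residual r*(t) = Y(t) − ∑_{i=1}^{δmax} (aᵢ·Y(t−i) + bᵢ·X(t−i) + cᵢ·X(t−i+1−Δ₀)). Then there exist coefficient vectors a′, b′ indexed by i ∈ {1, …, δmax+Δ₀−1} such that for every t ∈ ℤ, r*(t) = Y(t) − ∑_{i=1}^{δmax+Δ₀−1} (a′ᵢ·Y(t−i) + b′ᵢ·X(t−i)); that is, when the alignment delays are all equal to the constant Δ₀, every variable-lag regression residual coincides pointwise with a fixed-lag regression residual. -/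
/-! With a constant delay, the warped term `X (t - i + 1 - Δ₀)` is the ordinary lag
`X (t - j)` with `j = i + Δ₀ - 1`, and `Δ₀ ≤ j ≤ δmax + Δ₀ - 1` because `Δ₀ ≥ 1`. So after
reindexing, the `c`-terms are fixed-lag `X`-terms; extending `a` and `b` by zero to the longer
lag range and adding the reindexed `c` to `b` gives the fixed-lag coefficients. -/

open Finset

theorem sum_Icc_eq_sum_Icc_ite {M : Type*} [AddCommMonoid M] (f : ℕ → M) {n m : ℕ}
    (h : n ≤ m) : ∑ i ∈ Icc 1 n, f i = ∑ i ∈ Icc 1 m, if i ≤ n then f i else 0 := by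
  rw [← sum_filter]
  congr 1
  ext i
  simp only [mem_Icc, mem_filter]
  omega

theorem sum_Icc_add_eq_sum_Icc_ite {M : Type*} [AddCommMonoid M] (f : ℕ → M) (n k : ℕ) :
    ∑ i ∈ Icc 1 n, f (i + k) = ∑ j ∈ Icc 1 (n + k), if k < j then f j else 0 := by
  have hshift : (Icc 1 (n + k)).filter (k < ·) = (Icc 1 n).map (addRightEmbedding k) := by
    ext j
    simp only [map_add_right_Icc, mem_filter, mem_Icc]
    omega
  rw [← sum_filter, hshift, sum_map]
  rfl

theorem variable_lag_residual_eq_fixed_lag_residual_general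
    (X Y : ℤ → ℝ) (δmax Δ₀ : ℕ) (hΔ : 1 ≤ Δ₀)
    (a b c : ℕ → ℝ) :
    ∃ a' b' : ℕ → ℝ, ∀ t : ℤ,
      Y t - ∑ i ∈ Finset.Icc 1 δmax,
          (a i * Y (t - (i : ℤ)) + b i * X (t - (i : ℤ))
            + c i * X (t - (i : ℤ) + 1 - (Δ₀ : ℤ)))
      = Y t - ∑ i ∈ Finset.Icc 1 (δmax + Δ₀ - 1),
          (a' i * Y (t - (i : ℤ)) + b' i * X (t - (i : ℤ))) := by
  obtain ⟨k, rfl⟩ := Nat.exists_eq_add_of_le' hΔ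
  refine ⟨fun i => if i ≤ δmax then a i else 0,
    fun i => (if i ≤ δmax then b i else 0) + (if k < i then c (i - k) else 0), fun t => ?_⟩
  dsimp only
  rw [← add_assoc, Nat.add_sub_cancel_right]
  congr 1
  calc _ = ∑ i ∈ Icc 1 δmax, (a i * Y (t - i) + b i * X (t - i))
        + ∑ i ∈ Icc 1 δmax, c (i + k - k) * X (t - ↑(i + k)) := by
        rw [← sum_add_distrib]
        refine sum_congr rfl fun i _ => ?_
        rw [Nat.add_sub_cancel]
        push_cast
        ring_nf
    _ = ∑ i ∈ Icc 1 (δmax + k), ((if i ≤ δmax then a i * Y (t - i) + b i * X (t - i) else 0)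
        + if k < i then c (i - k) * X (t - i) else 0) := by
        rw [sum_Icc_eq_sum_Icc_ite _ (Nat.le_add_right δmax k),
          sum_Icc_add_eq_sum_Icc_ite (fun j => c (j - k) * X (t - j)), ← sum_add_distrib]
    _ = _ := by
        refine sum_congr rfl fun i _ => ?_
        split_ifs <;> ring

/-- Proposition 4.1: when all alignment delays equal a constant `Δ₀ ≥ 1`, every
variable-lag regression residual coincides pointwise with a fixed-lag regression
residual with maximum lag `δmax + Δ₀ - 1`. -/
theorem variable_lag_residual_eq_fixed_lag_residual
    (X Y : ℤ → ℝ) (δmax Δ₀ : ℕ) (hδ : 1 ≤ δmax) (hΔ : 1 ≤ Δ₀)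
    (a b c : ℕ → ℝ) :
    ∃ a' b' : ℕ → ℝ, ∀ t : ℤ,
      Y t - ∑ i ∈ Finset.Icc 1 δmax,
          (a i * Y (t - (i : ℤ)) + b i * X (t - (i : ℤ))
            + c i * X (t - (i : ℤ) + 1 - (Δ₀ : ℤ)))
      = Y t - ∑ i ∈ Finset.Icc 1 (δmax + Δ₀ - 1),
          (a' i * Y (t - (i : ℤ)) + b' i * X (t - (i : ℤ))) :=
  variable_lag_residual_eq_fixed_lag_residual_general X Y δmax Δ₀ hΔ a b c
end

section
/- Let X, Y : ℤ → ℝ be time series, δmax ≥ 1, and let Δ : ℤ → ℤ be an alignment delay sequence with 1 ≤ Δ(t) ≤ δmax and Y(t) = X(t − Δ(t)) for all t ∈ ℤ. Define the warped series X*(s) = X(s+1−Δ(s+1)). Then choosing the coefficients aᵢ = 0 and bᵢ = 0 for all i, c₁ = 1, and cᵢ = 0 for i ≥ 2, the variable-lag residual r*(t) = Y(t) − ∑_{i=1}^{δmax} (aᵢ·Y(t−i) + bᵢ·X(t−i) + cᵢ·X*(t−i)) is identically zero; in particular, its empirical variance over any finite time window is zero. -/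
/-!
With `a = b = 0` and `c` the indicator of lag `1`, the regression collapses to
`r*(t) = Y t - X*(t - 1)`, and the warping was built so that `X*(t - 1) = X (t - Δ t)`, which is
`Y t` by alignment. A residual that vanishes identically has zero empirical variance.
-/

open Finset

def warp (X : ℤ → ℝ) (Δ : ℤ → ℤ) (s : ℤ) : ℝ := X (s + 1 - Δ (s + 1))

def variableLagResidual (X Y : ℤ → ℝ) (Δ : ℤ → ℤ) (δmax : ℕ) (a b c : ℕ → ℝ) (t : ℤ) : ℝ :=
  Y t - ∑ i ∈ Icc 1 δmax, (a i * Y (t - i) + b i * X (t - i) + c i * warp X Δ (t - i))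

noncomputable def empiricalVariance {α : Type*} (S : Finset α) (f : α → ℝ) : ℝ :=
  1 / (#S : ℝ) * ∑ t ∈ S, (f t - 1 / (#S : ℝ) * ∑ s ∈ S, f s) ^ 2

theorem warp_sub_one (X : ℤ → ℝ) (Δ : ℤ → ℤ) (t : ℤ) : warp X Δ (t - 1) = X (t - Δ t) := by
  simp only [warp, sub_add_cancel]

theorem variableLagResidual_lag_one {X Y : ℤ → ℝ} {Δ : ℤ → ℤ} {δmax : ℕ} (hδ : 1 ≤ δmax)
    (t : ℤ) :
    variableLagResidual X Y Δ δmax (fun _ => 0) (fun _ => 0) (fun i => if i = 1 then 1 else 0) t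
      = Y t - warp X Δ (t - 1) := by
  simp [variableLagResidual, ite_mul, hδ]

theorem variableLagResidual_eq_zero_of_aligned {X Y : ℤ → ℝ} {Δ : ℤ → ℤ} {δmax : ℕ}
    (hδ : 1 ≤ δmax) (hY : ∀ t, Y t = X (t - Δ t)) (t : ℤ) :
    variableLagResidual X Y Δ δmax (fun _ => 0) (fun _ => 0) (fun i => if i = 1 then 1 else 0) t
      = 0 := by
  rw [variableLagResidual_lag_one hδ, warp_sub_one, hY, sub_self]

theorem empiricalVariance_eq_zero_of_eqOn_const {α : Type*} {S : Finset α} {f : α → ℝ} {c : ℝ}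
    (hf : ∀ t ∈ S, f t = c) : empiricalVariance S f = 0 := by
  rcases S.eq_empty_or_nonempty with rfl | hS
  · simp [empiricalVariance]
  have hmean : 1 / (#S : ℝ) * ∑ s ∈ S, f s = c := by
    rw [sum_congr rfl hf, sum_const, nsmul_eq_mul]
    field_simp [hS.card_pos.ne']
  unfold empiricalVariance
  rw [hmean, sum_eq_zero fun t ht => by rw [hf t ht, sub_self, sq, mul_zero], mul_zero]

theorem variable_lag_residual_zero_of_aligned_general
    (X Y : ℤ → ℝ) (δmax : ℕ) (hδ : 1 ≤ δmax) (Δ : ℤ → ℤ)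
    (hY : ∀ t : ℤ, Y t = X (t - Δ t)) :
    (∀ t : ℤ,
        Y t - ∑ i ∈ Finset.Icc 1 δmax,
            ((0 : ℝ) * Y (t - (i : ℤ)) + (0 : ℝ) * X (t - (i : ℤ))
              + (if i = 1 then (1 : ℝ) else 0)
                  * X ((t - (i : ℤ)) + 1 - Δ ((t - (i : ℤ)) + 1)))
          = 0) ∧
    (∀ S : Finset ℤ, S.Nonempty →
        (1 / (S.card : ℝ)) * ∑ t ∈ S,
          ((Y t - ∑ i ∈ Finset.Icc 1 δmax,
              ((0 : ℝ) * Y (t - (i : ℤ)) + (0 : ℝ) * X (t - (i : ℤ))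
                + (if i = 1 then (1 : ℝ) else 0)
                    * X ((t - (i : ℤ)) + 1 - Δ ((t - (i : ℤ)) + 1))))
            - (1 / (S.card : ℝ)) * ∑ s ∈ S,
                (Y s - ∑ i ∈ Finset.Icc 1 δmax,
                  ((0 : ℝ) * Y (s - (i : ℤ)) + (0 : ℝ) * X (s - (i : ℤ))
                    + (if i = 1 then (1 : ℝ) else 0)
                        * X ((s - (i : ℤ)) + 1 - Δ ((s - (i : ℤ)) + 1)))))^2
          = 0) := by
  have hres := variableLagResidual_eq_zero_of_aligned hδ hY
  exact ⟨hres, fun S _ => empiricalVariance_eq_zero_of_eqOn_const fun t _ => hres t⟩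

/-- First half of the proof of Proposition 4.2: if `Y` is an exactly delay-aligned
copy of `X` (with delays in `[1, δmax]`), then with coefficients `a = b = 0`,
`c₁ = 1`, `cᵢ = 0` for `i ≥ 2`, the variable-lag residual is identically zero,
and hence its empirical variance over any nonempty finite window is zero. -/
theorem variable_lag_residual_zero_of_aligned
    (X Y : ℤ → ℝ) (δmax : ℕ) (hδ : 1 ≤ δmax) (Δ : ℤ → ℤ)
    (hΔ : ∀ t : ℤ, 1 ≤ Δ t ∧ Δ t ≤ (δmax : ℤ))
    (hY : ∀ t : ℤ, Y t = X (t - Δ t)) :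
    (∀ t : ℤ,
        Y t - ∑ i ∈ Finset.Icc 1 δmax,
            ((0 : ℝ) * Y (t - (i : ℤ)) + (0 : ℝ) * X (t - (i : ℤ))
              + (if i = 1 then (1 : ℝ) else 0)
                  * X ((t - (i : ℤ)) + 1 - Δ ((t - (i : ℤ)) + 1)))
          = 0) ∧
    (∀ S : Finset ℤ, S.Nonempty →
        (1 / (S.card : ℝ)) * ∑ t ∈ S,
          ((Y t - ∑ i ∈ Finset.Icc 1 δmax,
              ((0 : ℝ) * Y (t - (i : ℤ)) + (0 : ℝ) * X (t - (i : ℤ))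
                + (if i = 1 then (1 : ℝ) else 0)
                    * X ((t - (i : ℤ)) + 1 - Δ ((t - (i : ℤ)) + 1))))
            - (1 / (S.card : ℝ)) * ∑ s ∈ S,
                (Y s - ∑ i ∈ Finset.Icc 1 δmax,
                  ((0 : ℝ) * Y (s - (i : ℤ)) + (0 : ℝ) * X (s - (i : ℤ))
                    + (if i = 1 then (1 : ℝ) else 0)
                        * X ((s - (i : ℤ)) + 1 - Δ ((s - (i : ℤ)) + 1)))))^2
          = 0) :=
  variable_lag_residual_zero_of_aligned_general X Y δmax hδ Δ hY
end

section
/- Let 𝒳 be a nonempty finite family of time series X_k : ℤ → ℝ (the initiators) and 𝒴 a nonempty finite family of time series U_j : ℤ → ℝ (the followers), and let t₀ ≤ t₂ ≤ t₁ be integers and ε ≥ 0. Define the aggregate time series agg(𝒮)(t) = (1/|𝒮|)·∑_{Z∈𝒮} Z(t). Suppose (1) for every X ∈ 𝒳 and every t with t₀ ≤ t ≤ t₁, |agg(𝒳)(t) − X(t)| ≤ ε, and (2) for every U ∈ 𝒴 there exists X ∈ 𝒳 such that |X(t) − U(t)| ≤ ε for every t with t₂ ≤ t ≤ t₁. Then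 for every t with t₂ ≤ t ≤ t₁, |agg(𝒳)(t) − agg(𝒴)(t)| ≤ 2ε. -/
/-- Aggregate of a finite family of time series. -/
noncomputable def agg {ι : Type*} [Fintype ι] (Z : ι → ℤ → ℝ) (t : ℤ) : ℝ :=
  (1 / (Fintype.card ι : ℝ)) * ∑ k, Z k t

/-- The aggregate is a convex combination of the members, with equal weights. -/
theorem agg_mem_of_convex {ι : Type*} [Fintype ι] [Nonempty ι] {s : Set ℝ} (hs : Convex ℝ s)
    (Z : ι → ℤ → ℝ) (t : ℤ) (hZ : ∀ k, Z k t ∈ s) : agg Z t ∈ s := by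
  have hcard : (0 : ℝ) < Fintype.card ι := by exact_mod_cast Fintype.card_pos
  have hweights : ∑ _k : ι, (1 / (Fintype.card ι : ℝ)) = 1 := by
    rw [Finset.sum_const, Finset.card_univ, nsmul_eq_mul]
    field_simp
  have := hs.sum_mem (fun _ _ => by positivity) hweights (fun k _ => hZ k)
  simpa only [agg, smul_eq_mul, ← Finset.mul_sum] using this

theorem abs_sub_agg_le {ι : Type*} [Fintype ι] [Nonempty ι] (Z : ι → ℤ → ℝ) (t : ℤ) {c δ : ℝ}
    (hZ : ∀ k, |c - Z k t| ≤ δ) : |c - agg Z t| ≤ δ := by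
  have hball : agg Z t ∈ Metric.closedBall c δ :=
    agg_mem_of_convex (convex_closedBall c δ) Z t fun k => by
      rw [Metric.mem_closedBall, Real.dist_eq, abs_sub_comm]
      exact hZ k
  rwa [Metric.mem_closedBall, Real.dist_eq, abs_sub_comm] at hball

theorem agg_initiators_close_agg_followers_general
    {ι κ : Type*} [Fintype ι] [Fintype κ] [Nonempty κ]
    (Xf : ι → ℤ → ℝ) (Uf : κ → ℤ → ℝ)
    (t₀ t₂ t₁ : ℤ) (h02 : t₀ ≤ t₂) (ε : ℝ)
    (h1 : ∀ k : ι, ∀ t : ℤ, t₀ ≤ t → t ≤ t₁ → |agg Xf t - Xf k t| ≤ ε)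
    (h2 : ∀ j : κ, ∃ k : ι, ∀ t : ℤ, t₂ ≤ t → t ≤ t₁ → |Xf k t - Uf j t| ≤ ε) :
    ∀ t : ℤ, t₂ ≤ t → t ≤ t₁ → |agg Xf t - agg Uf t| ≤ 2 * ε := by
  intro t ht2 ht1
  refine abs_sub_agg_le Uf t fun j => ?_
  obtain ⟨k, hk⟩ := h2 j
  calc |agg Xf t - Uf j t| ≤ |agg Xf t - Xf k t| + |Xf k t - Uf j t| := abs_sub_le _ _ _
    _ ≤ ε + ε := add_le_add (h1 k t (h02.trans ht2) ht1) (hk t ht2 ht1)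
    _ = 2 * ε := (two_mul ε).symm

/-- Quantitative content of Proposition 5.1: if every initiator stays within `ε`
of the initiators' aggregate on `[t₀, t₁]`, and every follower stays within `ε`
of some initiator on `[t₂, t₁]`, then the two aggregates stay within `2ε` of
each other on `[t₂, t₁]`. -/
theorem agg_initiators_close_agg_followers
    {ι κ : Type*} [Fintype ι] [Nonempty ι] [Fintype κ] [Nonempty κ]
    (Xf : ι → ℤ → ℝ) (Uf : κ → ℤ → ℝ)
    (t₀ t₂ t₁ : ℤ) (h02 : t₀ ≤ t₂) (h21 : t₂ ≤ t₁) (ε : ℝ) (hε : 0 ≤ ε)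
    (h1 : ∀ k : ι, ∀ t : ℤ, t₀ ≤ t → t ≤ t₁ → |agg Xf t - Xf k t| ≤ ε)
    (h2 : ∀ j : κ, ∃ k : ι, ∀ t : ℤ, t₂ ≤ t → t ≤ t₁ → |Xf k t - Uf j t| ≤ ε) :
    ∀ t : ℤ, t₂ ≤ t → t ≤ t₁ → |agg Xf t - agg Uf t| ≤ 2 * ε :=
  agg_initiators_close_agg_followers_general Xf Uf t₀ t₂ t₁ h02 ε h1 h2
end
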